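/- arXiv:2409.18739 — 7 statements merged into one kernel-verified Lean document; each statement's English description precedes it below -/
import Mathlib

section
/- The effective potential V is twice differentiable at ȳ, V′(ȳ) = 0, and V″(ȳ) = −(q μ₀/(2π m²)) p_z I₀ (1+k)³/(k d²). -/
open Real Filter Topology

/-! At `ȳ = d/(1+k)` the magnetic fields of the two wires cancel, so `ȳ` is a critical point of the
normalized potential `Ã₀`, at which moreover `Ã₀(ȳ) = 0`. Writing `V = F ∘ Ã₀` with the quadratic
`F z = (p_z - q z)² / (2m²)`, the chain rule gives `V'(ȳ) = F'(0) Ã₀'(ȳ) = 0`, and differentiating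
`F'(Ã₀) Ã₀'` once more at a critical point only leaves
`V''(ȳ) = F'(0) Ã₀''(ȳ) = -(q p_z/m²) A₀''(ȳ)`. -/

theorem hasDerivAt_deriv_comp_of_deriv_eq_zero {F F' f f' : ℝ → ℝ} {x f'' : ℝ}
    (hF : ∀ z, HasDerivAt F (F' z) z) (hF' : DifferentiableAt ℝ F' (f x))
    (hf : ∀ᶠ y in 𝓝 x, HasDerivAt f (f' y) y) (hf' : HasDerivAt f' f'' x) (hcrit : f' x = 0) :
    HasDerivAt (F ∘ f) 0 x ∧ HasDerivAt (deriv (F ∘ f)) (F' (f x) * f'') x := by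
  have hderiv : deriv (F ∘ f) =ᶠ[𝓝 x] fun y => F' (f y) * f' y :=
    hf.mono fun y hy => ((hF (f y)).comp y hy).deriv
  have hfx : HasDerivAt f 0 x := hcrit ▸ hf.self_of_nhds
  refine ⟨by simpa using (hF (f x)).comp x hfx, ?_⟩
  have hprod := (hF'.hasDerivAt.comp x hfx).fun_mul hf'
  simp only [mul_zero, zero_add, hcrit] at hprod
  exact hprod.congr_of_eventuallyEq hderiv

theorem hasDerivAt_log_abs_sub {a y : ℝ} (hy : y ≠ a) :
    HasDerivAt (fun y => log |y - a|) (y - a)⁻¹ y := by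
  have h := ((hasDerivAt_id y).sub_const a).log (sub_ne_zero.mpr hy)
  simp only [id_eq, one_div] at h
  simpa only [log_abs] using h

theorem hasDerivAt_inv_sub {a y : ℝ} (hy : y ≠ a) :
    HasDerivAt (fun y => (y - a)⁻¹) (-((y - a) ^ 2)⁻¹) y := by
  have h := ((hasDerivAt_id y).sub_const a).fun_inv (sub_ne_zero.mpr hy)
  simpa only [id_eq, neg_div, one_div] using h

theorem hasDerivAt_mul_log_abs_add_mul_log_abs_sub {a b d y : ℝ} (h0 : y ≠ 0) (hd : y ≠ d) :
    HasDerivAt (fun y => a * log |y| + b * log |y - d|) (a * y⁻¹ + b * (y - d)⁻¹) y := by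
  have h := ((hasDerivAt_log_abs_sub (a := 0) h0).const_mul a).fun_add
    ((hasDerivAt_log_abs_sub hd).const_mul b)
  simpa only [sub_zero] using h

theorem hasDerivAt_mul_inv_add_mul_inv_sub {a b d y : ℝ} (h0 : y ≠ 0) (hd : y ≠ d) :
    HasDerivAt (fun y => a * y⁻¹ + b * (y - d)⁻¹)
      (-(a * (y ^ 2)⁻¹ + b * ((y - d) ^ 2)⁻¹)) y := by
  have h := ((hasDerivAt_inv_sub (a := 0) h0).const_mul a).fun_add
    ((hasDerivAt_inv_sub hd).const_mul b)
  simpa only [sub_zero, mul_neg, neg_add] using h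

theorem hasDerivAt_mul_sub_mul_sq (c p q z : ℝ) :
    HasDerivAt (fun z => c * (p - q * z) ^ 2) (-(2 * c * q) * (p - q * z)) z := by
  refine ((((hasDerivAt_id z).const_mul q).const_sub p).pow 2).const_mul c |>.congr_deriv ?_
  simp only [id_eq, mul_one, Nat.cast_ofNat]
  ring

theorem div_one_add_sub_self {d k : ℝ} (hk1 : 1 + k ≠ 0) :
    d / (1 + k) - d = -(d * k) / (1 + k) := by
  field_simp
  ring

theorem div_one_add_ne_self {d k : ℝ} (hd : d ≠ 0) (hk : k ≠ 0) (hk1 : 1 + k ≠ 0) :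
    d / (1 + k) ≠ d := by
  rw [← sub_ne_zero, div_one_add_sub_self hk1]
  exact div_ne_zero (neg_ne_zero.mpr (mul_ne_zero hd hk)) hk1

theorem inv_div_one_add_add_mul_inv_sub_self {d k : ℝ} (hd : d ≠ 0) (hk : k ≠ 0)
    (hk1 : 1 + k ≠ 0) : (d / (1 + k))⁻¹ + k * (d / (1 + k) - d)⁻¹ = 0 := by
  rw [div_one_add_sub_self hk1]
  field_simp
  ring

theorem inv_sq_div_one_add_add_mul_inv_sq_sub_self {d k : ℝ} (hd : d ≠ 0) (hk : k ≠ 0)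
    (hk1 : 1 + k ≠ 0) :
    ((d / (1 + k)) ^ 2)⁻¹ + k * ((d / (1 + k) - d) ^ 2)⁻¹ = (1 + k) ^ 3 / (k * d ^ 2) := by
  rw [div_one_add_sub_self hk1]
  field_simp
  ring

theorem second_deriv_V_at_ybar_general
    (μ₀ d I₀ k m q p_z : ℝ) (hd : 0 < d)
    (hk : k ≠ 0) (hk1 : k ≠ -1)
    (A₀ Atilde V : ℝ → ℝ)
    (hA : ∀ y : ℝ,
      A₀ y = -(μ₀ / (2 * π)) * (I₀ * Real.log |y| + k * I₀ * Real.log |y - d|))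
    (ybar : ℝ) (hybar : ybar = d / (1 + k))
    (hAtilde : ∀ y : ℝ, Atilde y = A₀ y - A₀ ybar)
    (hV : ∀ y : ℝ, V y = (1 / (2 * m ^ 2)) * (p_z - q * Atilde y) ^ 2) :
    DifferentiableAt ℝ V ybar ∧
    DifferentiableAt ℝ (deriv V) ybar ∧
    deriv V ybar = 0 ∧
    deriv (deriv V) ybar
      = -(q * μ₀ / (2 * π * m ^ 2)) * p_z * I₀ * ((1 + k) ^ 3 / (k * d ^ 2)) := by
  subst hybar
  have hk1' : 1 + k ≠ 0 := fun h => hk1 (by linarith)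
  have hy0 : d / (1 + k) ≠ 0 := div_ne_zero hd.ne' hk1'
  have hyd : d / (1 + k) ≠ d := div_one_add_ne_self hd.ne' hk hk1'
  have hAt : Atilde = fun y =>
      -(μ₀ / (2 * π)) * (I₀ * log |y| + k * I₀ * log |y - d|) - A₀ (d / (1 + k)) :=
    funext fun y => by rw [hAtilde, hA]
  have hf : ∀ᶠ y in 𝓝 (d / (1 + k)),
      HasDerivAt Atilde (-(μ₀ / (2 * π)) * (I₀ * y⁻¹ + k * I₀ * (y - d)⁻¹)) y := by
    filter_upwards [isOpen_ne.mem_nhds hy0, isOpen_ne.mem_nhds hyd] with y hy0' hyd'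
    exact hAt ▸ ((hasDerivAt_mul_log_abs_add_mul_log_abs_sub hy0' hyd').const_mul _).sub_const _
  have hcrit : -(μ₀ / (2 * π)) * (I₀ * (d / (1 + k))⁻¹ + k * I₀ * (d / (1 + k) - d)⁻¹) = 0 := by
    linear_combination -(μ₀ / (2 * π)) * I₀ * inv_div_one_add_add_mul_inv_sub_self hd.ne' hk hk1'
  rw [show V = (fun z => 1 / (2 * m ^ 2) * (p_z - q * z) ^ 2) ∘ Atilde from funext hV]
  obtain ⟨hV1, hV2⟩ := hasDerivAt_deriv_comp_of_deriv_eq_zero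
    (hasDerivAt_mul_sub_mul_sq (1 / (2 * m ^ 2)) p_z q) (by fun_prop) hf
    ((hasDerivAt_mul_inv_add_mul_inv_sub hy0 hyd).const_mul _) hcrit
  refine ⟨hV1.differentiableAt, hV2.differentiableAt, hV1.deriv, hV2.deriv.trans ?_⟩
  rw [hAtilde, sub_self]
  linear_combination -(q * μ₀ * p_z * I₀ / (2 * π * m ^ 2)) *
    inv_sq_div_one_add_add_mul_inv_sq_sub_self hd.ne' hk hk1'

/-- The effective potential `V` is twice differentiable at `ȳ = d/(1+k)`,
`V′(ȳ) = 0`, and `V″(ȳ) = −(q μ₀/(2π m²)) p_z I₀ (1+k)³/(k d²)`. -/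
theorem second_deriv_V_at_ybar
    (μ₀ d I₀ k m q p_z : ℝ) (hμ : 0 < μ₀) (hd : 0 < d) (hI : I₀ ≠ 0)
    (hk : k ≠ 0) (hk1 : k ≠ -1) (hm : 0 < m)
    (A₀ Atilde V : ℝ → ℝ)
    (hA : ∀ y : ℝ,
      A₀ y = -(μ₀ / (2 * π)) * (I₀ * Real.log |y| + k * I₀ * Real.log |y - d|))
    (ybar : ℝ) (hybar : ybar = d / (1 + k))
    (hAtilde : ∀ y : ℝ, Atilde y = A₀ y - A₀ ybar)
    (hV : ∀ y : ℝ, V y = (1 / (2 * m ^ 2)) * (p_z - q * Atilde y) ^ 2) :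
    DifferentiableAt ℝ V ybar ∧
    DifferentiableAt ℝ (deriv V) ybar ∧
    deriv V ybar = 0 ∧
    deriv (deriv V) ybar
      = -(q * μ₀ / (2 * π * m ^ 2)) * p_z * I₀ * ((1 + k) ^ 3 / (k * d ^ 2)) :=
  second_deriv_V_at_ybar_general μ₀ d I₀ k m q p_z hd hk hk1 A₀ Atilde V hA ybar hybar hAtilde hV
end

section
/- The third derivative of the effective potential at ȳ equals V‴(ȳ) = (q μ₀/(π m²)) p_z I₀ (1+k)⁴(k−1)/(k² d³); equivalently, the coefficient β₀ := (1/2) V‴(ȳ) equals (q μ₀/(2π m²)) p_z I₀ (1+k)⁴(k−1)/(k² d³). -/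
/-!
At `ȳ = d / (1 + k)` the fields of the two wires cancel, so `ȳ` is a critical point of `A₀`;
since also `Ã₀(ȳ) = 0`, in `(u²)''' = 2 u u''' + 6 u' u''` for `u = p_z - q Ã₀` only the first
term survives and `V'''(ȳ) = -(q p_z / m²) A₀'''(ȳ)`. The latter is explicit because
`(log |y - a|)''' = 2 / (y - a)³`, and `ȳ - d = -k ȳ` turns it into the stated closed form.
-/

open Real
open scoped Nat

/-- No hypothesis on `x`: `deriv log = Inv.inv` holds on all of `ℝ`, both sides being `0` at `0`. -/
theorem Real.iteratedDeriv_succ_log (n : ℕ) (x : ℝ) :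
    iteratedDeriv (n + 1) log x = (-1) ^ n * n ! * x ^ (-(n : ℤ) - 1) := by
  rw [iteratedDeriv_succ', Real.deriv_log', iteratedDeriv_eq_iterate, iter_deriv_inv]
  ring_nf

theorem Real.iteratedDeriv_succ_log_abs_sub (n : ℕ) (a y : ℝ) :
    iteratedDeriv (n + 1) (fun y ↦ log |y - a|) y = (-1) ^ n * n ! / (y - a) ^ (n + 1) := by
  simp only [log_abs]
  rw [iteratedDeriv_comp_sub_const]
  dsimp only
  rw [Real.iteratedDeriv_succ_log, div_eq_mul_inv, ← zpow_natCast (y - a), ← zpow_neg]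
  push_cast
  ring_nf

theorem Real.contDiffAt_log_abs_sub {n : WithTop ℕ∞} {a y : ℝ} (hy : y ≠ a) :
    ContDiffAt ℝ n (fun y ↦ log |y - a|) y := by
  simp only [log_abs]
  exact (contDiffAt_log.2 (sub_ne_zero.2 hy)).comp y (contDiffAt_id.sub contDiffAt_const)

section IteratedDeriv

variable {𝕜 : Type*} [NontriviallyNormedField 𝕜]

theorem iteratedDeriv_three_sq {u : 𝕜 → 𝕜} {x : 𝕜} (hu : ContDiffAt 𝕜 3 u x) :
    iteratedDeriv 3 (fun y ↦ u y ^ 2) x =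
      2 * u x * iteratedDeriv 3 u x + 6 * deriv u x * iteratedDeriv 2 u x := by
  simp only [sq]
  rw [iteratedDeriv_fun_mul hu hu]
  simp only [Finset.sum_range_succ, Finset.range_one, Finset.sum_singleton, Nat.choose_zero_right,
    Nat.choose_one_right, Nat.choose_succ_self_right, Nat.choose_self, Nat.reduceAdd, Nat.reduceSub,
    Nat.add_one_sub_one, tsub_zero, tsub_self, Nat.cast_one, Nat.cast_ofNat, iteratedDeriv_zero,
    iteratedDeriv_one, one_mul]
  ring

theorem iteratedDeriv_const_sub_mul {n : ℕ} (hn : 0 < n) (a q : 𝕜) (f : 𝕜 → 𝕜) (x : 𝕜) :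
    iteratedDeriv n (fun y ↦ a - q * f y) x = -(q * iteratedDeriv n f x) := by
  rw [iteratedDeriv_const_sub hn, iteratedDeriv_neg, iteratedDeriv_const_mul_field]

theorem iteratedDeriv_three_mul_sq_sub_of_deriv_eq_zero {f : 𝕜 → 𝕜} {x₀ : 𝕜}
    (hf : ContDiffAt 𝕜 3 f x₀) (hcrit : deriv f x₀ = 0) (C p q : 𝕜) :
    iteratedDeriv 3 (fun y ↦ C * (p - q * (f y - f x₀)) ^ 2) x₀ =
      -(2 * C * p * q) * iteratedDeriv 3 f x₀ := by
  have hsq : (fun y ↦ (p - q * (f y - f x₀)) ^ 2) = fun y ↦ ((p + q * f x₀) - q * f y) ^ 2 := by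
    funext y
    ring
  have hu : ContDiffAt 𝕜 3 (fun y ↦ (p + q * f x₀) - q * f y) x₀ := by fun_prop
  have hu_crit : deriv (fun y ↦ (p + q * f x₀) - q * f y) x₀ = 0 := by
    rw [← iteratedDeriv_one, iteratedDeriv_const_sub_mul one_pos, iteratedDeriv_one, hcrit,
      mul_zero, neg_zero]
  rw [iteratedDeriv_const_mul_field, hsq, iteratedDeriv_three_sq hu, hu_crit,
    iteratedDeriv_const_sub_mul three_pos]
  ring

end IteratedDeriv

noncomputable def twoWirePotential (μ₀ I₀ k d y : ℝ) : ℝ :=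
  -(μ₀ / (2 * π)) * (I₀ * Real.log |y| + k * I₀ * Real.log |y - d|)

section TwoWirePotential

variable {μ₀ I₀ k d y : ℝ}

theorem twoWirePotential_eq (μ₀ I₀ k d : ℝ) :
    twoWirePotential μ₀ I₀ k d =
      fun y ↦ -(μ₀ / (2 * π)) * (I₀ * log |y - 0| + k * I₀ * log |y - d|) := by
  funext y
  rw [sub_zero]
  rfl

theorem contDiffAt_twoWirePotential {n : WithTop ℕ∞} (hy : y ≠ 0) (hyd : y ≠ d) :
    ContDiffAt ℝ n (twoWirePotential μ₀ I₀ k d) y := by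
  rw [twoWirePotential_eq]
  have h0 := contDiffAt_log_abs_sub (n := n) hy
  have hd := contDiffAt_log_abs_sub (n := n) hyd
  fun_prop

theorem iteratedDeriv_succ_twoWirePotential (n : ℕ) (hy : y ≠ 0) (hyd : y ≠ d) :
    iteratedDeriv (n + 1) (twoWirePotential μ₀ I₀ k d) y =
      -(μ₀ / (2 * π)) * I₀ * ((-1) ^ n * n !) * (1 / y ^ (n + 1) + k / (y - d) ^ (n + 1)) := by
  have h0 := contDiffAt_log_abs_sub (n := (n + 1 : ℕ)) hy
  have hd := contDiffAt_log_abs_sub (n := (n + 1 : ℕ)) hyd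
  rw [twoWirePotential_eq, iteratedDeriv_const_mul_field,
    iteratedDeriv_fun_add (contDiffAt_const.mul h0) (contDiffAt_const.mul hd),
    iteratedDeriv_const_mul_field, iteratedDeriv_const_mul_field,
    iteratedDeriv_succ_log_abs_sub, iteratedDeriv_succ_log_abs_sub, sub_zero]
  ring

theorem self_ne_mul_one_add (hy : y ≠ 0) (hk : k ≠ 0) : y ≠ y * (1 + k) :=
  fun h ↦ mul_ne_zero hy hk (by linear_combination -h)

theorem deriv_twoWirePotential_eq_zero (hy : y ≠ 0) (hk : k ≠ 0) (hd : y * (1 + k) = d) :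
    deriv (twoWirePotential μ₀ I₀ k d) y = 0 := by
  subst hd
  rw [← iteratedDeriv_one, iteratedDeriv_succ_twoWirePotential 0 hy (self_ne_mul_one_add hy hk)]
  field_simp
  ring

theorem iteratedDeriv_three_twoWirePotential (hy : y ≠ 0) (hk : k ≠ 0) (hd : y * (1 + k) = d) :
    iteratedDeriv 3 (twoWirePotential μ₀ I₀ k d) y =
      -(μ₀ / π) * I₀ * ((1 + k) ^ 4 * (k - 1) / (k ^ 2 * d ^ 3)) := by
  subst hd
  rw [iteratedDeriv_succ_twoWirePotential 2 hy (self_ne_mul_one_add hy hk)]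
  field_simp
  ring

end TwoWirePotential

theorem third_deriv_V_at_ybar_general
    (μ₀ d I₀ k m q p_z : ℝ) (hd : 0 < d)
    (hk : k ≠ 0) (hk1 : k ≠ -1)
    (A₀ Atilde V : ℝ → ℝ)
    (hA : ∀ y : ℝ,
      A₀ y = -(μ₀ / (2 * π)) * (I₀ * Real.log |y| + k * I₀ * Real.log |y - d|))
    (ybar : ℝ) (hybar : ybar = d / (1 + k))
    (hAtilde : ∀ y : ℝ, Atilde y = A₀ y - A₀ ybar)
    (hV : ∀ y : ℝ, V y = (1 / (2 * m ^ 2)) * (p_z - q * Atilde y) ^ 2) :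
    iteratedDeriv 3 V ybar
      = (q * μ₀ / (π * m ^ 2)) * p_z * I₀ * ((1 + k) ^ 4 * (k - 1) / (k ^ 2 * d ^ 3)) ∧
    (1 / 2) * iteratedDeriv 3 V ybar
      = (q * μ₀ / (2 * π * m ^ 2)) * p_z * I₀ * ((1 + k) ^ 4 * (k - 1) / (k ^ 2 * d ^ 3)) := by
  have hk1' : 1 + k ≠ 0 := fun h ↦ hk1 (by linear_combination h)
  have hybar_eq : ybar * (1 + k) = d := by rw [hybar, div_mul_cancel₀ d hk1']
  have hybar0 : ybar ≠ 0 := hybar ▸ div_ne_zero hd.ne' hk1'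
  obtain rfl : A₀ = twoWirePotential μ₀ I₀ k d := funext hA
  have hV' : V = fun y ↦ 1 / (2 * m ^ 2) * (p_z - q * (twoWirePotential μ₀ I₀ k d y -
      twoWirePotential μ₀ I₀ k d ybar)) ^ 2 := by
    funext y
    rw [hV, hAtilde]
  have hV3 : iteratedDeriv 3 V ybar =
      (q * μ₀ / (π * m ^ 2)) * p_z * I₀ * ((1 + k) ^ 4 * (k - 1) / (k ^ 2 * d ^ 3)) := by
    rw [hV', iteratedDeriv_three_mul_sq_sub_of_deriv_eq_zero
      (contDiffAt_twoWirePotential hybar0 (hybar_eq ▸ self_ne_mul_one_add hybar0 hk))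
      (deriv_twoWirePotential_eq_zero hybar0 hk hybar_eq),
      iteratedDeriv_three_twoWirePotential hybar0 hk hybar_eq]
    ring
  exact ⟨hV3, by rw [hV3]; ring⟩

/-- The third derivative of the effective potential at `ȳ` equals
`V‴(ȳ) = (q μ₀/(π m²)) p_z I₀ (1+k)⁴ (k−1)/(k² d³)`; equivalently
`β₀ = (1/2) V‴(ȳ) = (q μ₀/(2π m²)) p_z I₀ (1+k)⁴ (k−1)/(k² d³)`. -/
theorem third_deriv_V_at_ybar
    (μ₀ d I₀ k m q p_z : ℝ) (hμ : 0 < μ₀) (hd : 0 < d) (hI : I₀ ≠ 0)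
    (hk : k ≠ 0) (hk1 : k ≠ -1) (hm : 0 < m)
    (A₀ Atilde V : ℝ → ℝ)
    (hA : ∀ y : ℝ,
      A₀ y = -(μ₀ / (2 * π)) * (I₀ * Real.log |y| + k * I₀ * Real.log |y - d|))
    (ybar : ℝ) (hybar : ybar = d / (1 + k))
    (hAtilde : ∀ y : ℝ, Atilde y = A₀ y - A₀ ybar)
    (hV : ∀ y : ℝ, V y = (1 / (2 * m ^ 2)) * (p_z - q * Atilde y) ^ 2) :
    iteratedDeriv 3 V ybar
      = (q * μ₀ / (π * m ^ 2)) * p_z * I₀ * ((1 + k) ^ 4 * (k - 1) / (k ^ 2 * d ^ 3)) ∧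
    (1 / 2) * iteratedDeriv 3 V ybar
      = (q * μ₀ / (2 * π * m ^ 2)) * p_z * I₀ * ((1 + k) ^ 4 * (k - 1) / (k ^ 2 * d ^ 3)) :=
  third_deriv_V_at_ybar_general μ₀ d I₀ k m q p_z hd hk hk1 A₀ Atilde V hA ybar hybar hAtilde hV
end

section
/- Let (x, y) : J → ℝ² be a twice differentiable solution on an open interval J of the reduced system ẍ = (q/m²)(p_z − q A(x,y,t)) ∂A/∂x(x,y,t), ÿ = (q/m²)(p_z − q A(x,y,t)) ∂A/∂y(x,y,t), with (x(t), y(t), t) ∈ U for all t ∈ J. If x(t₀) = ẋ(t₀) = 0 for some t₀ ∈ J, then x(t) = 0 for all t ∈ J. -/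
/-!
Freeze `y` along the given solution: the `x`-equation is then the second-order ODE
`ẍ = h(x, y(t), t)` with `h = (q/m²)(p_z - q A) ∂A/∂x`, which is `C¹` because `A` is `C²`, hence
locally Lipschitz in `x`. Since `∂A/∂x` vanishes on `x = 0`, `x ≡ 0` solves it too, so by local
uniqueness the set of times where `(x, ẋ) = 0` is open; it is also closed in `J` by continuity,
and `J` is connected.
-/

open Set Filter Topology

theorem IsPreconnected.eqOn_of_eventuallyEq_of_eq {X Y : Type*} [TopologicalSpace X]
    [TopologicalSpace Y] [T2Space Y] {s : Set X} (hs : IsPreconnected s)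
    {f g : X → Y} (hf : ∀ x ∈ s, ContinuousAt f x) (hg : ∀ x ∈ s, ContinuousAt g x)
    (hloc : ∀ x ∈ s, f x = g x → f =ᶠ[𝓝 x] g) {x₀ : X} (hx₀ : x₀ ∈ s) (h : f x₀ = g x₀) :
    EqOn f g s := by
  set u := {x | f =ᶠ[𝓝 x] g}
  have hu : IsOpen u := isOpen_iff_mem_nhds.mpr fun x hx => hx.eventually_nhds
  have hsub : s ⊆ u := by
    refine hs.subset_of_closure_inter_subset hu ⟨x₀, hx₀, hloc x₀ hx₀ h⟩ ?_
    rintro x ⟨hxu, hxs⟩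
    refine hloc x hxs (tendsto_nhds_unique_of_frequently_eq (hf x hxs) (hg x hxs) ?_)
    exact (mem_closure_iff_frequently.mp hxu).mono fun y hy => hy.eq_of_nhds
  exact fun x hx => (hsub hx).eq_of_nhds

theorem LipschitzOnWith.exists_mem_nhds_eventually_slice {α β γ : Type*} [PseudoEMetricSpace α]
    [PseudoEMetricSpace β] [PseudoEMetricSpace γ] {h : α × β → γ} {K : NNReal} {t : Set (α × β)}
    {a : α} {b : β} (hh : LipschitzOnWith K h t) (ht : t ∈ 𝓝 (a, b)) :
    ∃ s ∈ 𝓝 a, ∀ᶠ w in 𝓝 b, LipschitzOnWith K (fun u => h (u, w)) s := by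
  obtain ⟨s, hs, v, hv, hsv⟩ := mem_nhds_prod_iff.mp ht
  refine ⟨s, hs, eventually_of_mem hv fun w hw => ?_⟩
  have := hh.comp (LipschitzWith.prodMk_right w).lipschitzOnWith
    fun u hu => hsv (mk_mem_prod hu hw)
  rwa [mul_one] at this

section

variable {E : Type*} [NormedAddCommGroup E] [NormedSpace ℝ E]

theorem eventuallyEq_zero_of_hasDerivAt_of_lipschitzOnWith {H : ℝ → E → E} {K : NNReal}
    {s : Set E} {x x' : ℝ → E} {t₀ : ℝ} (hs : s ∈ 𝓝 0)
    (hH : ∀ᶠ t in 𝓝 t₀, LipschitzOnWith K (H t) s) (hH0 : ∀ᶠ t in 𝓝 t₀, H t 0 = 0)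
    (hx : ∀ᶠ t in 𝓝 t₀, HasDerivAt x (x' t) t)
    (hx' : ∀ᶠ t in 𝓝 t₀, HasDerivAt x' (H t (x t)) t)
    (hx0 : x t₀ = 0) (hx'0 : x' t₀ = 0) :
    (fun t => (x t, x' t)) =ᶠ[𝓝 t₀] 0 := by
  have hv : ∀ᶠ t in 𝓝 t₀, LipschitzOnWith (max 1 (K * 1)) (fun p : E × E => (p.2, H t p.1))
      (Prod.fst ⁻¹' s) :=
    hH.mono fun t hK => LipschitzWith.prod_snd.lipschitzOnWith.prodMk
      (hK.comp LipschitzWith.prod_fst.lipschitzOnWith fun _ hp => hp)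
  have hxs : ∀ᶠ t in 𝓝 t₀, x t ∈ s :=
    hx.self_of_nhds.continuousAt.tendsto.eventually (hx0 ▸ hs)
  refine ODE_solution_unique_of_eventually hv ?_ ?_ (by simp [hx0, hx'0])
  · filter_upwards [hx, hx', hxs] with t ht ht' hts using ⟨ht.prodMk ht', hts⟩
  · filter_upwards [hH0] with t ht
    simpa [ht] using ⟨hasDerivAt_const t (0 : E × E), mem_of_mem_nhds hs⟩

theorem eventuallyEq_zero_of_hasDerivAt_of_contDiffAt {F : Type*} [NormedAddCommGroup F]
    [NormedSpace ℝ F] {h : E × F → E} {z : ℝ → F} {x x' : ℝ → E} {t₀ : ℝ}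
    (hh : ContDiffAt ℝ 1 h (0, z t₀)) (hz : ContinuousAt z t₀)
    (hh0 : ∀ᶠ t in 𝓝 t₀, h (0, z t) = 0)
    (hx : ∀ᶠ t in 𝓝 t₀, HasDerivAt x (x' t) t)
    (hx' : ∀ᶠ t in 𝓝 t₀, HasDerivAt x' (h (x t, z t)) t)
    (hx0 : x t₀ = 0) (hx'0 : x' t₀ = 0) :
    (fun t => (x t, x' t)) =ᶠ[𝓝 t₀] 0 := by
  obtain ⟨K, T, hT, hK⟩ := hh.exists_lipschitzOnWith
  obtain ⟨s, hs, hslice⟩ := hK.exists_mem_nhds_eventually_slice hT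
  exact eventuallyEq_zero_of_hasDerivAt_of_lipschitzOnWith (H := fun t u => h (u, z t)) hs
    (hz.eventually hslice) hh0 hx hx' hx0 hx'0

end

theorem plane_invariant_general
    (m q p_z : ℝ)
    (U : Set (ℝ × ℝ × ℝ)) (hU : IsOpen U)
    (A : ℝ × ℝ × ℝ → ℝ) (hA : ContDiffOn ℝ 2 A U)
    (hAx : ∀ p ∈ U, p.1 = 0 → fderiv ℝ A p (1, 0, 0) = 0)
    (a b : ℝ)
    (x y x' y' x'' : ℝ → ℝ)
    (hmem : ∀ t ∈ Set.Ioo a b, (x t, y t, t) ∈ U)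
    (hx : ∀ t ∈ Set.Ioo a b, HasDerivAt x (x' t) t)
    (hy : ∀ t ∈ Set.Ioo a b, HasDerivAt y (y' t) t)
    (hx' : ∀ t ∈ Set.Ioo a b, HasDerivAt x' (x'' t) t)
    (heqx : ∀ t ∈ Set.Ioo a b,
      x'' t = (q / m ^ 2) * (p_z - q * A (x t, y t, t))
        * fderiv ℝ A (x t, y t, t) (1, 0, 0))
    (t₀ : ℝ) (ht₀ : t₀ ∈ Set.Ioo a b)
    (hx0 : x t₀ = 0) (hx'0 : x' t₀ = 0) :
    ∀ t ∈ Set.Ioo a b, x t = 0 := by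
  set h : ℝ × ℝ × ℝ → ℝ := fun p => q / m ^ 2 * (p_z - q * A p) * fderiv ℝ A p (1, 0, 0)
  have hloc : ∀ s ∈ Ioo a b, (x s, x' s) = 0 → (fun t => (x t, x' t)) =ᶠ[𝓝 s] 0 := by
    intro s hs hs0
    obtain ⟨hxs, hx's⟩ := Prod.mk_eq_zero.mp hs0
    have hz : ContinuousAt (fun t => (y t, t)) s := (hy s hs).continuousAt.prodMk continuousAt_id
    have hP : ((0 : ℝ), y s, s) ∈ U := hxs ▸ hmem s hs
    have hA2 : ContDiffAt ℝ 2 A (0, y s, s) := hA.contDiffAt (hU.mem_nhds hP)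
    have hh : ContDiffAt ℝ 1 h (0, y s, s) :=
      (contDiffAt_const.mul (contDiffAt_const.sub (contDiffAt_const.mul
        (hA2.of_le one_le_two)))).mul ((hA2.fderiv_right le_rfl).clm_apply contDiffAt_const)
    have hIoo : ∀ᶠ t in 𝓝 s, t ∈ Ioo a b := isOpen_Ioo.mem_nhds hs
    refine eventuallyEq_zero_of_hasDerivAt_of_contDiffAt (z := fun t => (y t, t)) hh hz ?_ ?_ ?_ hxs hx's
    · filter_upwards [(continuousAt_const.prodMk hz).eventually (hU.mem_nhds hP)] with t ht
      simp [h, hAx _ ht rfl]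
    · filter_upwards [hIoo] using hx
    · filter_upwards [hIoo] with t ht
      simpa only [heqx t ht] using hx' t ht
  have hsol := isPreconnected_Ioo.eqOn_of_eventuallyEq_of_eq
    (fun s hs => (hx s hs).continuousAt.prodMk (hx' s hs).continuousAt)
    (fun _ _ => continuousAt_const) hloc ht₀ (by simp [hx0, hx'0])
  exact fun t ht => congrArg Prod.fst (hsol ht)

/-- If the partial derivative `∂A/∂x` vanishes on the plane `x = 0`, then every solution
of the reduced system with `x(t₀) = ẋ(t₀) = 0` at some time `t₀` satisfies `x ≡ 0`. -/
theorem plane_invariant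
    (m q p_z : ℝ) (hm : 0 < m)
    (U : Set (ℝ × ℝ × ℝ)) (hU : IsOpen U)
    (A : ℝ × ℝ × ℝ → ℝ) (hA : ContDiffOn ℝ 2 A U)
    (hAx : ∀ p ∈ U, p.1 = 0 → fderiv ℝ A p (1, 0, 0) = 0)
    (a b : ℝ)
    (x y x' y' x'' y'' : ℝ → ℝ)
    (hmem : ∀ t ∈ Set.Ioo a b, (x t, y t, t) ∈ U)
    (hx : ∀ t ∈ Set.Ioo a b, HasDerivAt x (x' t) t)
    (hy : ∀ t ∈ Set.Ioo a b, HasDerivAt y (y' t) t)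
    (hx' : ∀ t ∈ Set.Ioo a b, HasDerivAt x' (x'' t) t)
    (hy' : ∀ t ∈ Set.Ioo a b, HasDerivAt y' (y'' t) t)
    (heqx : ∀ t ∈ Set.Ioo a b,
      x'' t = (q / m ^ 2) * (p_z - q * A (x t, y t, t))
        * fderiv ℝ A (x t, y t, t) (1, 0, 0))
    (heqy : ∀ t ∈ Set.Ioo a b,
      y'' t = (q / m ^ 2) * (p_z - q * A (x t, y t, t))
        * fderiv ℝ A (x t, y t, t) (0, 1, 0))
    (t₀ : ℝ) (ht₀ : t₀ ∈ Set.Ioo a b)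
    (hx0 : x t₀ = 0) (hx'0 : x' t₀ = 0) :
    ∀ t ∈ Set.Ioo a b, x t = 0 :=
  plane_invariant_general m q p_z U hU A hA hAx a b x y x' y' x'' hmem hx hy hx' heqx t₀ ht₀ hx0
    hx'0
end

section
/- For every (x, y) with (x, y) ≠ (0, 0) and every t ∈ ℝ, the improper integral a(x, y, t) = lim_{M→∞} ∫₀^M I(t − R(z)/c)/R(z) dz exists and is finite, where R(z) = √(z² + x² + y²). -/
/-!
Let `J` be the primitive of `I`. As `I` is periodic with mean zero, `J` is periodic and hence
bounded. With `φ z = t - R z / c` one has `φ' z = -z / (c R z)`, so the integrand equals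
`(J ∘ φ)' z · (-c / z)`. Integrating by parts on `[1, M]` leaves the boundary term `O(1 / M)`
and the absolutely convergent integral of the bounded function `J ∘ φ` against `c / z²`.
-/

open Real Filter MeasureTheory Set Topology

namespace Function.Periodic

variable {f : ℝ → ℝ} {T : ℝ}

theorem periodic_primitive (hf : Periodic f T) (h_int : ∀ a b, IntervalIntegrable f volume a b)
    (h_mean : ∫ x in (0:ℝ)..T, f x = 0) (a : ℝ) : Periodic (fun s => ∫ x in a..s, f x) T :=
  fun s => by
    simp only [hf.intervalIntegral_add_eq_add a s h_int, hf.intervalIntegral_add_eq a 0, zero_add,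
      h_mean, add_zero]

theorem exists_abs_primitive_le (hf : Periodic f T) (hT : T ≠ 0)
    (h_int : ∀ a b, IntervalIntegrable f volume a b) (h_mean : ∫ x in (0:ℝ)..T, f x = 0)
    (a : ℝ) :
    ∃ C, ∀ s, |∫ x in a..s, f x| ≤ C := by
  obtain ⟨C, hC⟩ := ((hf.periodic_primitive h_int h_mean a).isBounded_of_continuous hT
    (intervalIntegral.continuous_primitive h_int a)).exists_norm_le
  exact ⟨C, fun s => hC _ (mem_range_self s)⟩

end Function.Periodic

theorem exists_tendsto_intervalIntegral_deriv_mul_of_bounded {u u' v v' : ℝ → ℝ} {a C : ℝ}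
    (hu : ∀ x ∈ Ici a, HasDerivAt u (u' x) x) (hv : ∀ x ∈ Ici a, HasDerivAt v (v' x) x)
    (hu' : ∀ b, IntervalIntegrable u' volume a b) (hv' : IntegrableOn v' (Ioi a))
    (hC : ∀ x ∈ Ici a, |u x| ≤ C) (hv_lim : Tendsto v atTop (𝓝 0)) :
    ∃ L, Tendsto (fun b => ∫ x in a..b, u' x * v x) atTop (𝓝 L) := by
  have huv' : IntegrableOn (fun x => u x * v' x) (Ioi a) := by
    refine hv'.bdd_mul (c := C) ?_ ?_
    · exact (ContinuousOn.mono (fun x hx => (hu x hx).continuousAt.continuousWithinAt)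
        Ioi_subset_Ici_self).aestronglyMeasurable measurableSet_Ioi
    · filter_upwards [ae_restrict_mem measurableSet_Ioi] with x hx
        using hC x (Ioi_subset_Ici_self hx)
  have h_parts : ∀ᶠ b in atTop, ∫ x in a..b, u' x * v x
      = u b * v b - u a * v a - ∫ x in a..b, u x * v' x := by
    filter_upwards [eventually_ge_atTop a] with b hb
    have hab : uIcc a b ⊆ Ici a := by rw [uIcc_of_le hb]; exact Icc_subset_Ici_self
    rw [intervalIntegral.integral_mul_deriv_eq_deriv_mul (fun x hx => hu x (hab hx))
      (fun x hx => hv x (hab hx)) (hu' b)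
      ((intervalIntegrable_iff_integrableOn_Ioc_of_le hb).2 (hv'.mono_set Ioc_subset_Ioi_self))]
    ring
  have huv_lim : Tendsto (fun b => u b * v b) atTop (𝓝 0) := by
    refine isBoundedUnder_le_mul_tendsto_zero ?_ hv_lim
    exact ⟨C, eventually_map.2 ((eventually_ge_atTop a).mono fun x hx => hC x hx)⟩
  have h_tail := intervalIntegral_tendsto_integral_Ioi a huv' tendsto_id
  exact ⟨_, ((huv_lim.sub_const _).sub h_tail).congr' (h_parts.mono fun _ h => h.symm)⟩

theorem hasDerivAt_sqrt_sq_add {r : ℝ} (hr : 0 < r) (z : ℝ) :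
    HasDerivAt (fun z => √(z ^ 2 + r)) (z / √(z ^ 2 + r)) z := by
  have hpos : 0 < z ^ 2 + r := by positivity
  convert ((hasDerivAt_pow 2 z).add_const r).sqrt hpos.ne' using 1
  field_simp
  ring

theorem integrableOn_Ioi_const_div_sq (c : ℝ) {a : ℝ} (ha : 0 < a) :
    IntegrableOn (fun z : ℝ => c / z ^ 2) (Ioi a) := by
  refine IntegrableOn.congr_fun (f := fun z => c * z ^ (-2 : ℝ))
    ((integrableOn_Ioi_rpow_of_lt (by norm_num) ha).const_mul c) (fun z hz => ?_) measurableSet_Ioi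
  have hz : 0 < z := ha.trans hz
  simp [Real.rpow_neg hz.le, div_eq_mul_inv]

theorem exists_tendsto_intervalIntegral_retarded {I : ℝ → ℝ} {c r C : ℝ} (hc : c ≠ 0)
    (hr : 0 < r) (hI : Continuous I) (hC : ∀ s, |∫ u in (0:ℝ)..s, I u| ≤ C) (t : ℝ) :
    ∃ L, Tendsto (fun M => ∫ z in (0:ℝ)..M, I (t - √(z ^ 2 + r) / c) / √(z ^ 2 + r))
      atTop (𝓝 L) := by
  set R : ℝ → ℝ := fun z => √(z ^ 2 + r)
  have hR_pos : ∀ z, 0 < R z := fun z => sqrt_pos.2 (by positivity)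
  have hR_cont : Continuous R := by fun_prop
  have hf : Continuous fun z => I (t - R z / c) / R z :=
    (hI.comp (by fun_prop)).div hR_cont fun z => (hR_pos z).ne'
  have hu : ∀ z ∈ Ici (1:ℝ), HasDerivAt (fun z => ∫ u in (0:ℝ)..t - R z / c, I u)
      (I (t - R z / c) * -(z / R z / c)) z := fun z _ =>
    (hI.integral_hasStrictDerivAt 0 _).hasDerivAt.comp z
      (((hasDerivAt_sqrt_sq_add hr z).div_const c).const_sub t)
  have hv : ∀ z ∈ Ici (1:ℝ), HasDerivAt (fun z => -c / z) (c / z ^ 2) z := fun z hz => by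
    simpa [div_eq_mul_inv] using (hasDerivAt_inv (zero_lt_one.trans_le hz).ne').const_mul (-c)
  have hu' : ∀ b, IntervalIntegrable (fun z => I (t - R z / c) * -(z / R z / c)) volume 1 b :=
    fun b => Continuous.intervalIntegrable
      (by fun_prop (disch := exact fun z => (hR_pos z).ne')) _ _
  obtain ⟨L, hL⟩ :
      ∃ L, Tendsto (fun M => ∫ z in (1:ℝ)..M, I (t - R z / c) / R z) atTop (𝓝 L) := by
    refine (exists_tendsto_intervalIntegral_deriv_mul_of_bounded hu hv hu'
      (integrableOn_Ioi_const_div_sq c one_pos) (fun z _ => hC _)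
      (tendsto_const_nhds.div_atTop tendsto_id)).imp fun L hL => hL.congr' ?_
    filter_upwards [eventually_ge_atTop 1] with M hM
    refine intervalIntegral.integral_congr fun z hz => ?_
    have hz : z ≠ 0 := (zero_lt_one.trans_le (uIcc_of_le hM ▸ hz).1).ne'
    have := (hR_pos z).ne'
    field_simp
  refine ⟨(∫ z in (0:ℝ)..1, I (t - R z / c) / R z) + L, (hL.const_add _).congr fun M => ?_⟩
  exact intervalIntegral.integral_add_adjacent_intervals (hf.intervalIntegrable _ _)
    (hf.intervalIntegrable _ _)

/-- For every `(x,y) ≠ (0,0)` and every `t`, the improper integral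
`a(x,y,t) = lim_{M→∞} ∫₀^M I(t − R(z)/c)/R(z) dz` exists and is finite,
where `R(z) = √(z² + x² + y²)`. -/
theorem retarded_potential_converges
    (c T : ℝ) (hc : 0 < c) (hT : 0 < T)
    (I : ℝ → ℝ) (hI : ContDiff ℝ 4 I) (hper : Function.Periodic I T)
    (hmean : (∫ s in (0:ℝ)..T, I s) = 0)
    (x y t : ℝ) (hxy : (x, y) ≠ ((0 : ℝ), (0 : ℝ))) :
    ∃ L : ℝ, Tendsto
      (fun M : ℝ => ∫ z in (0:ℝ)..M,
        I (t - Real.sqrt (z ^ 2 + x ^ 2 + y ^ 2) / c)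
          / Real.sqrt (z ^ 2 + x ^ 2 + y ^ 2))
      atTop (nhds L) := by
  obtain ⟨C, hC⟩ := hper.exists_abs_primitive_le hT.ne'
    (fun a b => hI.continuous.intervalIntegrable a b) hmean 0
  have hr : 0 < x ^ 2 + y ^ 2 := by
    have : x ≠ 0 ∨ y ≠ 0 := by contrapose! hxy; simp [hxy]
    rcases this with h | h <;> positivity
  simp_rw [add_assoc]
  exact exists_tendsto_intervalIntegral_retarded hc.ne' hr hI.continuous hC t
end

section
/- For every (x, y) with (x, y) ≠ (0, 0) and every t ∈ ℝ, the partial derivative ∂a/∂x(x, y, t) exists and equals −∫₀^∞ x [ I′(t − R(z)/c)/(c R(z)²) + I(t − R(z)/c)/R(z)³ ] dz, where this last integral converges absolutely and R(z) = √(z² + x² + y²). -/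
/-!
Differentiation under the integral sign. On a neighbourhood `U` of `x` on which `s² + y²` stays
above some `ε² > 0` and `|s|` stays bounded, the `s`-derivative of the integrand is dominated by
`K / (z² + ε²)`, which is integrable on `(0, ∞)`: `I` and `I'` are continuous and `T`-periodic,
hence bounded. The domination yields the absolute convergence of the derivative integral and the
uniform convergence on `U` of the derivatives of the truncated integrals `∫₀^M`, so the derivative
of their pointwise limit `a` is the limit of the derivatives.
-/

open Real Filter MeasureTheory Topology Set

theorem Function.Periodic.exists_abs_le_of_continuous {f : ℝ → ℝ} {T : ℝ}
    (hf : Function.Periodic f T) (hT : T ≠ 0) (hfc : Continuous f) : ∃ C, ∀ u, |f u| ≤ C := by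
  obtain ⟨C, hC⟩ := (hf.isBounded_of_continuous hT hfc).exists_norm_le
  exact ⟨C, fun u => hC _ ⟨u, rfl⟩⟩

theorem Function.Periodic.deriv {f : ℝ → ℝ} {T : ℝ} (hf : Function.Periodic f T) :
    Function.Periodic (deriv f) T := fun u => by
  rw [← deriv_comp_add_const, show (fun x => f (x + T)) = f from funext hf]

theorem integrable_inv_sq_add_sq {ε : ℝ} (hε : ε ≠ 0) :
    Integrable fun z : ℝ => (z ^ 2 + ε ^ 2)⁻¹ := by
  convert (integrable_inv_one_add_sq.comp_div hε).const_mul (ε ^ 2)⁻¹ using 2 with z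
  field_simp
  ring

section ImproperIntegral

variable {E : Type*} [NormedAddCommGroup E] [NormedSpace ℝ E]

theorem tendstoUniformlyOn_intervalIntegral_Ioi {α : Type*} {f : α → ℝ → E} {U : Set α}
    {ψ : ℝ → ℝ} (hψ : IntegrableOn ψ (Ioi 0))
    (hf : ∀ s ∈ U, AEStronglyMeasurable (f s) (volume.restrict (Ioi 0)))
    (hbound : ∀ s ∈ U, ∀ z, ‖f s z‖ ≤ ψ z) :
    TendstoUniformlyOn (fun M s => ∫ z in 0..M, f s z) (fun s => ∫ z in Ioi 0, f s z)
      atTop U := by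
  rw [Metric.tendstoUniformlyOn_iff]
  intro δ hδ
  filter_upwards [(tendsto_integral_Ioi_zero (f := ψ) tendsto_id).eventually (gt_mem_nhds hδ),
    eventually_ge_atTop 0] with M hψM hM s hs
  have hfs : IntegrableOn (f s) (Ioi 0) := hψ.mono' (hf s hs) (ae_of_all _ (hbound s hs))
  calc dist (∫ z in Ioi 0, f s z) (∫ z in 0..M, f s z)
      = ‖∫ z in Ioi M, f s z‖ := by
        rw [dist_eq_norm, ← intervalIntegral.integral_Ioi_sub_Ioi hfs hM, sub_sub_cancel]
    _ ≤ ∫ z in Ioi M, ψ z :=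
        norm_integral_le_of_norm_le (hψ.mono_set (Ioi_subset_Ioi hM)) (ae_of_all _ (hbound s hs))
    _ < δ := hψM

theorem hasDerivAt_of_tendsto_intervalIntegral_of_dominated [CompleteSpace E]
    {F F' : ℝ → ℝ → E} {U : Set ℝ} {ψ : ℝ → ℝ} {a : ℝ → E} {x : ℝ} (hU : IsOpen U) (hx : x ∈ U)
    (hψ : IntegrableOn ψ (Ioi 0))
    (hF : ∀ s ∈ U, Continuous (F s)) (hF' : ∀ s ∈ U, Continuous (F' s))
    (hderiv : ∀ s ∈ U, ∀ z, HasDerivAt (F · z) (F' s z) s)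
    (hbound : ∀ s ∈ U, ∀ z, ‖F' s z‖ ≤ ψ z)
    (ha : ∀ s ∈ U, Tendsto (fun M => ∫ z in 0..M, F s z) atTop (𝓝 (a s))) :
    IntegrableOn (F' x) (Ioi 0) ∧ HasDerivAt a (∫ z in Ioi 0, F' x z) x := by
  refine ⟨hψ.mono' (hF' x hx).aestronglyMeasurable (ae_of_all _ (hbound x hx)), ?_⟩
  refine hasDerivAt_of_tendstoUniformlyOn hU (tendstoUniformlyOn_intervalIntegral_Ioi hψ
    (fun s hs => (hF' s hs).aestronglyMeasurable) hbound) ?_ ha hx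
  filter_upwards [eventually_ge_atTop 0] with M hM s hs
  have hψM : IntervalIntegrable ψ volume 0 M :=
    (intervalIntegrable_iff_integrableOn_Ioc_of_le hM).2 (hψ.mono_set Ioc_subset_Ioi_self)
  refine (intervalIntegral.hasDerivAt_integral_of_dominated_loc_of_deriv_le (hU.mem_nhds hs)
    ?_ ((hF s hs).intervalIntegrable 0 M) (hF' s hs).aestronglyMeasurable
    (ae_of_all _ fun z _ s' hs' => hbound s' hs' z) hψM
    (ae_of_all _ fun z _ s' hs' => hderiv s' hs' z)).2
  filter_upwards [hU.mem_nhds hs] with s' hs' using (hF s' hs').aestronglyMeasurable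

end ImproperIntegral

section RetardedPotential

variable (I : ℝ → ℝ) (c t y : ℝ)

noncomputable def retardedDistance (y s z : ℝ) : ℝ := √(z ^ 2 + s ^ 2 + y ^ 2)

noncomputable def retardedIntegrand (s z : ℝ) : ℝ :=
  I (t - retardedDistance y s z / c) / retardedDistance y s z

noncomputable def retardedIntegrandNegDeriv (s z : ℝ) : ℝ :=
  s * (deriv I (t - retardedDistance y s z / c) / (c * retardedDistance y s z ^ 2)
    + I (t - retardedDistance y s z / c) / retardedDistance y s z ^ 3)

variable {c t y}

theorem sq_retardedDistance (s z : ℝ) :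
    retardedDistance y s z ^ 2 = z ^ 2 + s ^ 2 + y ^ 2 :=
  sq_sqrt (by positivity)

theorem retardedDistance_pos {s : ℝ} (hs : 0 < s ^ 2 + y ^ 2) (z : ℝ) :
    0 < retardedDistance y s z :=
  sqrt_pos.2 (by linarith [sq_nonneg z])

theorem continuous_retardedDistance (y s : ℝ) : Continuous (retardedDistance y s) := by
  unfold retardedDistance
  fun_prop

theorem hasDerivAt_retardedDistance {s : ℝ} (hs : 0 < s ^ 2 + y ^ 2) (z : ℝ) :
    HasDerivAt (retardedDistance y · z) (s / retardedDistance y s z) s := by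
  have h := (((hasDerivAt_pow 2 s).const_add (z ^ 2)).add_const (y ^ 2)).sqrt
    (by linarith [sq_nonneg z] : 0 < z ^ 2 + s ^ 2 + y ^ 2).ne'
  refine h.congr_deriv ?_
  have := (retardedDistance_pos hs z).ne'
  unfold retardedDistance at this ⊢
  field_simp
  norm_num

theorem hasDerivAt_retardedIntegrand (hc : c ≠ 0) (hI : Differentiable ℝ I) {s : ℝ}
    (hs : 0 < s ^ 2 + y ^ 2) (z : ℝ) :
    HasDerivAt (retardedIntegrand I c t y · z) (-retardedIntegrandNegDeriv I c t y s z) s := by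
  have hR := hasDerivAt_retardedDistance hs z
  have hnum := (hI _).hasDerivAt.comp s ((hR.div_const c).const_sub t)
  refine (hnum.div hR (retardedDistance_pos hs z).ne').congr_deriv ?_
  have := (retardedDistance_pos hs z).ne'
  simp only [retardedIntegrandNegDeriv, Function.comp_apply]
  field_simp
  ring

theorem continuous_retardedIntegrand (hI : Continuous I) {s : ℝ} (hs : 0 < s ^ 2 + y ^ 2) :
    Continuous (retardedIntegrand I c t y s) := by
  have := continuous_retardedDistance y s
  exact (hI.comp (by fun_prop)).div this fun z => (retardedDistance_pos hs z).ne'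

theorem continuous_retardedIntegrandNegDeriv (hc : c ≠ 0) (hI : Continuous I)
    (hI' : Continuous (deriv I)) {s : ℝ} (hs : 0 < s ^ 2 + y ^ 2) :
    Continuous (retardedIntegrandNegDeriv I c t y s) := by
  have hR := continuous_retardedDistance y s
  have hpos := retardedDistance_pos hs
  refine continuous_const.mul (((hI'.comp (by fun_prop)).div (by fun_prop) fun z => ?_).add
    ((hI.comp (by fun_prop)).div (by fun_prop) fun z => (pow_pos (hpos z) 3).ne'))
  exact mul_ne_zero hc (pow_pos (hpos z) 2).ne'

theorem abs_retardedIntegrandNegDeriv_le (hc : 0 < c) {C₀ C₁ ε B s : ℝ}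
    (hI : ∀ u, |I u| ≤ C₀) (hI' : ∀ u, |deriv I u| ≤ C₁) (hε : 0 < ε)
    (hεs : ε ^ 2 ≤ s ^ 2 + y ^ 2) (hsB : |s| ≤ B) (z : ℝ) :
    |retardedIntegrandNegDeriv I c t y s z| ≤ B * (C₁ / c + C₀ / ε) * (z ^ 2 + ε ^ 2)⁻¹ := by
  set R := retardedDistance y s z
  set u := t - R / c
  have hR2 : z ^ 2 + ε ^ 2 ≤ R ^ 2 := by rw [sq_retardedDistance]; linarith
  have hεR : ε ≤ R := le_sqrt_of_sq_le (by linarith [sq_nonneg z])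
  have hR3 : ε * (z ^ 2 + ε ^ 2) ≤ R ^ 3 := by
    rw [show R ^ 3 = R * R ^ 2 by ring]
    exact mul_le_mul hεR hR2 (by positivity) (hε.le.trans hεR)
  have hR : 0 < R := hε.trans_le hεR
  have hB : 0 ≤ B := (abs_nonneg s).trans hsB
  have hC₀ : 0 ≤ C₀ := (abs_nonneg _).trans (hI 0)
  have hC₁ : 0 ≤ C₁ := (abs_nonneg _).trans (hI' 0)
  calc |retardedIntegrandNegDeriv I c t y s z|
      = |s| * |deriv I u / (c * R ^ 2) + I u / R ^ 3| := abs_mul _ _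
    _ ≤ B * (|deriv I u| / (c * R ^ 2) + |I u| / R ^ 3) := by
        gcongr
        refine (abs_add_le _ _).trans_eq ?_
        rw [abs_div, abs_div, abs_of_pos (show 0 < c * R ^ 2 by positivity),
          abs_of_pos (show 0 < R ^ 3 by positivity)]
    _ ≤ B * (C₁ / (c * (z ^ 2 + ε ^ 2)) + C₀ / (ε * (z ^ 2 + ε ^ 2))) := by
        gcongr
        exacts [hI' u, hI u]
    _ = B * (C₁ / c + C₀ / ε) * (z ^ 2 + ε ^ 2)⁻¹ := by
        field_simp

end RetardedPotential

theorem retarded_potential_deriv_x_general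
    (c T : ℝ) (hc : 0 < c) (hT : 0 < T)
    (I : ℝ → ℝ) (hI : ContDiff ℝ 4 I) (hper : Function.Periodic I T)
    (a : ℝ → ℝ → ℝ → ℝ)
    (ha : ∀ x y t : ℝ, (x, y) ≠ ((0 : ℝ), (0 : ℝ)) →
      Tendsto
        (fun M : ℝ => ∫ z in (0:ℝ)..M,
          I (t - Real.sqrt (z ^ 2 + x ^ 2 + y ^ 2) / c)
            / Real.sqrt (z ^ 2 + x ^ 2 + y ^ 2))
        atTop (nhds (a x y t)))
    (x y t : ℝ) (hxy : (x, y) ≠ ((0 : ℝ), (0 : ℝ))) :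
    MeasureTheory.IntegrableOn
      (fun z : ℝ => x *
        (deriv I (t - Real.sqrt (z ^ 2 + x ^ 2 + y ^ 2) / c)
            / (c * Real.sqrt (z ^ 2 + x ^ 2 + y ^ 2) ^ 2)
          + I (t - Real.sqrt (z ^ 2 + x ^ 2 + y ^ 2) / c)
            / Real.sqrt (z ^ 2 + x ^ 2 + y ^ 2) ^ 3))
      (Set.Ioi (0 : ℝ)) ∧
    HasDerivAt (fun s : ℝ => a s y t)
      (-(∫ z in Set.Ioi (0 : ℝ), x *
        (deriv I (t - Real.sqrt (z ^ 2 + x ^ 2 + y ^ 2) / c)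
            / (c * Real.sqrt (z ^ 2 + x ^ 2 + y ^ 2) ^ 2)
          + I (t - Real.sqrt (z ^ 2 + x ^ 2 + y ^ 2) / c)
            / Real.sqrt (z ^ 2 + x ^ 2 + y ^ 2) ^ 3)))
      x := by
  have hI' : Continuous (deriv I) := hI.continuous_deriv (by norm_num)
  obtain ⟨C₀, hC₀⟩ := hper.exists_abs_le_of_continuous hT.ne' hI.continuous
  obtain ⟨C₁, hC₁⟩ := hper.deriv.exists_abs_le_of_continuous hT.ne' hI'
  have hxy' : 0 < x ^ 2 + y ^ 2 := by
    have : x ≠ 0 ∨ y ≠ 0 := by contrapose! hxy; simp [hxy]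
    rcases this with h | h <;> positivity
  set ε := √(x ^ 2 + y ^ 2) / 2
  have hε : 0 < ε := by positivity
  have hεx : ε ^ 2 < x ^ 2 + y ^ 2 := by rw [div_pow, sq_sqrt hxy'.le]; linarith
  set U := {s : ℝ | ε ^ 2 < s ^ 2 + y ^ 2} ∩ {s | |s| < |x| + 1}
  have hU : IsOpen U :=
    (isOpen_lt continuous_const (by fun_prop)).inter (isOpen_lt continuous_abs continuous_const)
  have hpos : ∀ s ∈ U, 0 < s ^ 2 + y ^ 2 := fun s hs => (pow_pos hε 2).trans hs.1
  obtain ⟨hint, hderiv⟩ := hasDerivAt_of_tendsto_intervalIntegral_of_dominated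
    (F := retardedIntegrand I c t y) (F' := fun s z => -retardedIntegrandNegDeriv I c t y s z)
    hU ⟨hεx, lt_add_one |x|⟩
    ((integrable_inv_sq_add_sq hε.ne').const_mul ((|x| + 1) * (C₁ / c + C₀ / ε))).integrableOn
    (fun s hs => continuous_retardedIntegrand I hI.continuous (hpos s hs))
    (fun s hs => (continuous_retardedIntegrandNegDeriv I hc.ne' hI.continuous hI' (hpos s hs)).neg)
    (fun s hs => hasDerivAt_retardedIntegrand I hc.ne' (hI.differentiable (by norm_num))
      (hpos s hs))
    (fun s hs z => (norm_neg _).trans_le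
      (abs_retardedIntegrandNegDeriv_le I hc hC₀ hC₁ hε hs.1.le hs.2.le z))
    (fun s hs => ha s y t fun h => (hpos s hs).ne' (by simp_all [Prod.ext_iff]))
  rw [integral_neg] at hderiv
  have hint' : IntegrableOn (retardedIntegrandNegDeriv I c t y x) (Ioi 0) := by
    simpa only [Pi.neg_def, neg_neg] using hint.neg
  exact ⟨hint', hderiv⟩

/-- For every `(x,y) ≠ (0,0)` and every `t`, the partial derivative `∂a/∂x(x,y,t)` of the
retarded potential exists and equals
`−∫₀^∞ x [ I′(t − R(z)/c)/(c R(z)²) + I(t − R(z)/c)/R(z)³ ] dz`,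
the last integral being absolutely convergent, where `R(z) = √(z² + x² + y²)`. -/
theorem retarded_potential_deriv_x
    (c T : ℝ) (hc : 0 < c) (hT : 0 < T)
    (I : ℝ → ℝ) (hI : ContDiff ℝ 4 I) (hper : Function.Periodic I T)
    (hmean : (∫ s in (0:ℝ)..T, I s) = 0)
    (a : ℝ → ℝ → ℝ → ℝ)
    (ha : ∀ x y t : ℝ, (x, y) ≠ ((0 : ℝ), (0 : ℝ)) →
      Tendsto
        (fun M : ℝ => ∫ z in (0:ℝ)..M,
          I (t - Real.sqrt (z ^ 2 + x ^ 2 + y ^ 2) / c)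
            / Real.sqrt (z ^ 2 + x ^ 2 + y ^ 2))
        atTop (nhds (a x y t)))
    (x y t : ℝ) (hxy : (x, y) ≠ ((0 : ℝ), (0 : ℝ))) :
    MeasureTheory.IntegrableOn
      (fun z : ℝ => x *
        (deriv I (t - Real.sqrt (z ^ 2 + x ^ 2 + y ^ 2) / c)
            / (c * Real.sqrt (z ^ 2 + x ^ 2 + y ^ 2) ^ 2)
          + I (t - Real.sqrt (z ^ 2 + x ^ 2 + y ^ 2) / c)
            / Real.sqrt (z ^ 2 + x ^ 2 + y ^ 2) ^ 3))
      (Set.Ioi (0 : ℝ)) ∧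
    HasDerivAt (fun s : ℝ => a s y t)
      (-(∫ z in Set.Ioi (0 : ℝ), x *
        (deriv I (t - Real.sqrt (z ^ 2 + x ^ 2 + y ^ 2) / c)
            / (c * Real.sqrt (z ^ 2 + x ^ 2 + y ^ 2) ^ 2)
          + I (t - Real.sqrt (z ^ 2 + x ^ 2 + y ^ 2) / c)
            / Real.sqrt (z ^ 2 + x ^ 2 + y ^ 2) ^ 3)))
      x :=
  retarded_potential_deriv_x_general c T hc hT I hI hper a ha x y t hxy
end

section
/- For every fixed y ≠ 0 and t ∈ ℝ, the function x ↦ a(x, y, t) is differentiable at x = 0 with derivative equal to 0. -/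
open Real Filter MeasureTheory

lemma RP_bdd {f : ℝ → ℝ} {T : ℝ} (hT : 0 < T) (hf : Continuous f)
    (hp : Function.Periodic f T) : ∃ C : ℝ, 0 ≤ C ∧ ∀ u, |f u| ≤ C := by
  obtain ⟨C, hC⟩ := (isCompact_Icc (a := (0:ℝ)) (b := T)).exists_bound_of_continuousOn
    hf.continuousOn
  refine ⟨max C 0, le_max_right _ _, fun u => ?_⟩
  obtain ⟨v, hv, huv⟩ := hp.exists_mem_Ico₀ hT u
  rw [huv]
  exact le_trans (hC v ⟨hv.1, hv.2.le⟩) (le_max_left _ _)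

lemma RP_deriv_periodic {f : ℝ → ℝ} {T : ℝ} (hp : Function.Periodic f T) :
    Function.Periodic (deriv f) T := by
  intro u
  have : (fun x => f (x + T)) = f := funext fun x => hp x
  calc deriv f (u + T) = deriv (fun x => f (x + T)) u := (deriv_comp_add_const f T u).symm
  _ = deriv f u := by rw [this]

lemma RP_integrable {y : ℝ} (hy : y ≠ 0) :
    IntegrableOn (fun z : ℝ => (z ^ 2 + y ^ 2)⁻¹) (Set.Ioi 0) := by
  have h1 : Integrable (fun x : ℝ => (1 + (x / y) ^ 2)⁻¹) :=
    integrable_inv_one_add_sq.comp_div hy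
  have h2 : Integrable (fun x : ℝ => (y^2)⁻¹ * (1 + (x / y) ^ 2)⁻¹) := h1.const_mul _
  have h3 : (fun x : ℝ => (y^2)⁻¹ * (1 + (x / y) ^ 2)⁻¹) = fun z => (z ^ 2 + y ^ 2)⁻¹ := by
    funext z
    have hy2 : y ^ 2 ≠ 0 := pow_ne_zero 2 hy
    field_simp
    ring
  rw [h3] at h2
  exact h2.integrableOn

lemma RP_hasDerivAt (I : ℝ → ℝ) (hI : Differentiable ℝ I) (c t z : ℝ) (hc : c ≠ 0)
    {w : ℝ} (hw : 0 < w) :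
    HasDerivAt (fun w => I (t - Real.sqrt (z ^ 2 + w) / c) / Real.sqrt (z ^ 2 + w))
      ((deriv I (t - Real.sqrt (z ^ 2 + w) / c) * (-(1 / (2 * Real.sqrt (z ^ 2 + w)) * 1 / c))
          * Real.sqrt (z ^ 2 + w)
        - I (t - Real.sqrt (z ^ 2 + w) / c) * (1 / (2 * Real.sqrt (z ^ 2 + w)) * 1))
        / Real.sqrt (z ^ 2 + w) ^ 2) w := by
  have hpos : 0 < z ^ 2 + w := by positivity
  have hS : Real.sqrt (z ^ 2 + w) ≠ 0 := by positivity
  have h1 : HasDerivAt (fun w : ℝ => z ^ 2 + w) 1 w := (hasDerivAt_id w).const_add (z ^ 2)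
  have h2 : HasDerivAt (fun w : ℝ => Real.sqrt (z ^ 2 + w))
      (1 / (2 * Real.sqrt (z ^ 2 + w)) * 1) w :=
    (Real.hasDerivAt_sqrt hpos.ne').comp w h1
  have h3 : HasDerivAt (fun w : ℝ => t - Real.sqrt (z ^ 2 + w) / c)
      (-(1 / (2 * Real.sqrt (z ^ 2 + w)) * 1 / c)) w := (h2.div_const c).const_sub t
  have h4 : HasDerivAt I (deriv I (t - Real.sqrt (z ^ 2 + w) / c))
      (t - Real.sqrt (z ^ 2 + w) / c) := (hI _).hasDerivAt
  have h5 := (h4.comp w h3).div h2 hS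
  exact h5

lemma RP_deriv_bound (I : ℝ → ℝ) (c t y z : ℝ) (hc : 0 < c) (hy : y ≠ 0)
    (C0 C1 : ℝ) (hC0 : ∀ u, |I u| ≤ C0) (hC1 : ∀ u, |deriv I u| ≤ C1)
    {w : ℝ} (hw : y ^ 2 ≤ w) :
    |(deriv I (t - Real.sqrt (z ^ 2 + w) / c) * (-(1 / (2 * Real.sqrt (z ^ 2 + w)) * 1 / c))
          * Real.sqrt (z ^ 2 + w)
        - I (t - Real.sqrt (z ^ 2 + w) / c) * (1 / (2 * Real.sqrt (z ^ 2 + w)) * 1))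
        / Real.sqrt (z ^ 2 + w) ^ 2|
      ≤ (C1 / (2 * c) + C0 / (2 * |y|)) / (z ^ 2 + y ^ 2) := by
  have hy2 : (0:ℝ) < y ^ 2 := by positivity
  have hwpos : 0 < w := lt_of_lt_of_le hy2 hw
  have hpos : 0 < z ^ 2 + w := by positivity
  set S := Real.sqrt (z ^ 2 + w) with hSdef
  have hSpos : 0 < S := Real.sqrt_pos.mpr hpos
  have hS2 : S ^ 2 = z ^ 2 + w := Real.sq_sqrt hpos.le
  have hSy : |y| ≤ S := by
    rw [hSdef, ← Real.sqrt_sq_eq_abs]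
    exact Real.sqrt_le_sqrt (by nlinarith)
  have hyabs : 0 < |y| := abs_pos.mpr hy
  set A := deriv I (t - S / c)
  set B := I (t - S / c)
  have hEq : (A * (-(1 / (2 * S) * 1 / c)) * S - B * (1 / (2 * S) * 1)) / S ^ 2
      = (-A / (2 * c) - B / (2 * S)) / (z ^ 2 + w) := by
    rw [hS2]
    field_simp
  rw [hEq, abs_div, abs_of_pos hpos]
  have hnum : |-A / (2 * c) - B / (2 * S)| ≤ C1 / (2 * c) + C0 / (2 * |y|) := by
    have h1 : |-A / (2 * c)| ≤ C1 / (2 * c) := by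
      rw [abs_div, abs_neg, abs_of_pos (by positivity : (0:ℝ) < 2 * c)]
      exact div_le_div_of_nonneg_right (hC1 _) (by positivity) |>.trans_eq rfl
    have h2 : |B / (2 * S)| ≤ C0 / (2 * |y|) := by
      rw [abs_div, abs_of_pos (by positivity : (0:ℝ) < 2 * S)]
      have hC0' : 0 ≤ C0 := (abs_nonneg _).trans (hC0 0)
      exact div_le_div₀ hC0' (hC0 _) (by positivity) (by nlinarith)
    calc |-A / (2 * c) - B / (2 * S)| ≤ |-A / (2 * c)| + |B / (2 * S)| := abs_sub _ _
      _ ≤ C1 / (2 * c) + C0 / (2 * |y|) := add_le_add h1 h2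
  have hC0' : 0 ≤ C0 := (abs_nonneg _).trans (hC0 0)
  have hC1' : 0 ≤ C1 := (abs_nonneg _).trans (hC1 0)
  have hK : 0 ≤ C1 / (2 * c) + C0 / (2 * |y|) :=
    add_nonneg (div_nonneg hC1' (by positivity)) (div_nonneg hC0' (by positivity))
  exact div_le_div₀ hK hnum (by positivity) (by nlinarith)

lemma RP_key (I : ℝ → ℝ) (hI : Differentiable ℝ I) (c t y : ℝ) (hc : 0 < c) (hy : y ≠ 0)
    (C0 C1 : ℝ) (hC0 : ∀ u, |I u| ≤ C0) (hC1 : ∀ u, |deriv I u| ≤ C1) (x z : ℝ) :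
    |I (t - Real.sqrt (z ^ 2 + x ^ 2 + y ^ 2) / c) / Real.sqrt (z ^ 2 + x ^ 2 + y ^ 2)
      - I (t - Real.sqrt (z ^ 2 + y ^ 2) / c) / Real.sqrt (z ^ 2 + y ^ 2)|
      ≤ ((C1 / (2 * c) + C0 / (2 * |y|)) * x ^ 2) / (z ^ 2 + y ^ 2) := by
  have hy2 : (0:ℝ) < y ^ 2 := by positivity
  have h := Convex.norm_image_sub_le_of_norm_hasDerivWithin_le
    (f := fun w => I (t - Real.sqrt (z ^ 2 + w) / c) / Real.sqrt (z ^ 2 + w))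
    (f' := fun w =>
      (deriv I (t - Real.sqrt (z ^ 2 + w) / c) * (-(1 / (2 * Real.sqrt (z ^ 2 + w)) * 1 / c))
          * Real.sqrt (z ^ 2 + w)
        - I (t - Real.sqrt (z ^ 2 + w) / c) * (1 / (2 * Real.sqrt (z ^ 2 + w)) * 1))
        / Real.sqrt (z ^ 2 + w) ^ 2)
    (s := Set.Icc (y ^ 2) (y ^ 2 + x ^ 2))
    (C := (C1 / (2 * c) + C0 / (2 * |y|)) / (z ^ 2 + y ^ 2))
    (fun w hw => (RP_hasDerivAt I hI c t z hc.ne' (lt_of_lt_of_le hy2 hw.1)).hasDerivWithinAt)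
    (fun w hw => RP_deriv_bound I c t y z hc hy C0 C1 hC0 hC1 hw.1)
    (convex_Icc _ _)
    (Set.left_mem_Icc.mpr (by nlinarith))
    (Set.right_mem_Icc.mpr (by nlinarith))
  have e1 : z ^ 2 + (y ^ 2 + x ^ 2) = z ^ 2 + x ^ 2 + y ^ 2 := by ring
  simp only [Real.norm_eq_abs, e1] at h
  have e2 : |y ^ 2 + x ^ 2 - y ^ 2| = x ^ 2 := by
    rw [show y ^ 2 + x ^ 2 - y ^ 2 = x ^ 2 by ring, abs_of_nonneg (by positivity)]
  rw [e2] at h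
  calc _ ≤ (C1 / (2 * c) + C0 / (2 * |y|)) / (z ^ 2 + y ^ 2) * x ^ 2 := h
    _ = ((C1 / (2 * c) + C0 / (2 * |y|)) * x ^ 2) / (z ^ 2 + y ^ 2) := by ring

/-- For every fixed `y ≠ 0` and `t ∈ ℝ`, the function `x ↦ a(x,y,t)` is differentiable
at `x = 0` with derivative equal to `0`. -/
theorem retarded_potential_deriv_zero_at_plane
    (c T : ℝ) (hc : 0 < c) (hT : 0 < T)
    (I : ℝ → ℝ) (hI : ContDiff ℝ 4 I) (hper : Function.Periodic I T)
    (hmean : (∫ s in (0:ℝ)..T, I s) = 0)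
    (a : ℝ → ℝ → ℝ → ℝ)
    (ha : ∀ x y t : ℝ, (x, y) ≠ ((0 : ℝ), (0 : ℝ)) →
      Tendsto
        (fun M : ℝ => ∫ z in (0:ℝ)..M,
          I (t - Real.sqrt (z ^ 2 + x ^ 2 + y ^ 2) / c)
            / Real.sqrt (z ^ 2 + x ^ 2 + y ^ 2))
        atTop (nhds (a x y t)))
    (y t : ℝ) (hy : y ≠ 0) :
    HasDerivAt (fun s : ℝ => a s y t) 0 0 := by
  have hy2 : (0:ℝ) < y ^ 2 := by positivity
  have hIdiff : Differentiable ℝ I := hI.differentiable (by norm_num)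
  obtain ⟨C0, hC0n, hC0⟩ := RP_bdd hT hI.continuous hper
  obtain ⟨C1, hC1n, hC1⟩ := RP_bdd hT (hI.continuous_deriv (by norm_num))
    (RP_deriv_periodic hper)
  set K : ℝ := C1 / (2 * c) + C0 / (2 * |y|) with hKdef
  have hK : 0 ≤ K := by
    have : (0:ℝ) < |y| := abs_pos.mpr hy
    apply add_nonneg <;> positivity
  set L : ℝ := ∫ z in Set.Ioi (0:ℝ), (z ^ 2 + y ^ 2)⁻¹ with hLdef
  have hbint := RP_integrable hy
  have hL : 0 ≤ L := setIntegral_nonneg measurableSet_Ioi (fun z _ => by positivity)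
  -- continuity facts
  have hsq : ∀ x : ℝ, Continuous fun z : ℝ => Real.sqrt (z ^ 2 + x ^ 2 + y ^ 2) :=
    fun x => Real.continuous_sqrt.comp (by continuity)
  have hsqne : ∀ x z : ℝ, Real.sqrt (z ^ 2 + x ^ 2 + y ^ 2) ≠ 0 := fun x z => by positivity
  have hcontE : ∀ x : ℝ, Continuous fun z : ℝ =>
      I (t - Real.sqrt (z ^ 2 + x ^ 2 + y ^ 2) / c) / Real.sqrt (z ^ 2 + x ^ 2 + y ^ 2) :=
    fun x => Continuous.div
      (hI.continuous.comp (continuous_const.sub ((hsq x).div_const c)))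
      (hsq x) (hsqne x)
  -- main quadratic bound
  have main : ∀ x : ℝ, |a x y t - a 0 y t| ≤ K * L * x ^ 2 := by
    intro x
    have hxy : ((x, y) : ℝ × ℝ) ≠ (0, 0) := by
      simp only [ne_eq, Prod.mk.injEq, not_and]
      intro _; exact hy
    have h0y : (((0:ℝ), y) : ℝ × ℝ) ≠ (0, 0) := by
      simp only [ne_eq, Prod.mk.injEq, not_and]
      intro _; exact hy
    have hA := ha x y t hxy
    have hB := ha 0 y t h0y
    have e0 : ∀ z : ℝ, z ^ 2 + 0 ^ 2 + y ^ 2 = z ^ 2 + y ^ 2 := fun z => by ring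
    simp only [e0] at hB
    have hC := (hA.sub hB).abs
    refine le_of_tendsto hC ?_
    filter_upwards [eventually_ge_atTop (0:ℝ)] with M hM
    have hint1 : IntervalIntegrable (fun z : ℝ =>
        I (t - Real.sqrt (z ^ 2 + x ^ 2 + y ^ 2) / c) / Real.sqrt (z ^ 2 + x ^ 2 + y ^ 2))
        volume 0 M := Continuous.intervalIntegrable (hcontE x) 0 M
    have hint2 : IntervalIntegrable (fun z : ℝ =>
        I (t - Real.sqrt (z ^ 2 + y ^ 2) / c) / Real.sqrt (z ^ 2 + y ^ 2)) volume 0 M := by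
      have : IntervalIntegrable (fun z : ℝ =>
          I (t - Real.sqrt (z ^ 2 + 0 ^ 2 + y ^ 2) / c) / Real.sqrt (z ^ 2 + 0 ^ 2 + y ^ 2))
          volume 0 M := Continuous.intervalIntegrable (hcontE 0) 0 M
      simpa only [e0] using this
    have hintb : IntervalIntegrable (fun z : ℝ => K * x ^ 2 * (z ^ 2 + y ^ 2)⁻¹)
        volume 0 M := by
      apply Continuous.intervalIntegrable
      exact continuous_const.mul (Continuous.inv₀ (by continuity) (fun z => by positivity))
    rw [← intervalIntegral.integral_sub hint1 hint2]
    calc |∫ z in (0:ℝ)..M,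
          (I (t - Real.sqrt (z ^ 2 + x ^ 2 + y ^ 2) / c) / Real.sqrt (z ^ 2 + x ^ 2 + y ^ 2)
            - I (t - Real.sqrt (z ^ 2 + y ^ 2) / c) / Real.sqrt (z ^ 2 + y ^ 2))|
        ≤ ∫ z in (0:ℝ)..M,
          |I (t - Real.sqrt (z ^ 2 + x ^ 2 + y ^ 2) / c) / Real.sqrt (z ^ 2 + x ^ 2 + y ^ 2)
            - I (t - Real.sqrt (z ^ 2 + y ^ 2) / c) / Real.sqrt (z ^ 2 + y ^ 2)| := by
          exact intervalIntegral.abs_integral_le_integral_abs hM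
      _ ≤ ∫ z in (0:ℝ)..M, K * x ^ 2 * (z ^ 2 + y ^ 2)⁻¹ := by
          apply intervalIntegral.integral_mono_on hM (hint1.sub hint2).abs hintb
          intro z _
          have := RP_key I hIdiff c t y hc hy C0 C1 hC0 hC1 x z
          calc _ ≤ (K * x ^ 2) / (z ^ 2 + y ^ 2) := this
            _ = K * x ^ 2 * (z ^ 2 + y ^ 2)⁻¹ := div_eq_mul_inv _ _
      _ = K * x ^ 2 * ∫ z in (0:ℝ)..M, (z ^ 2 + y ^ 2)⁻¹ := by
          rw [intervalIntegral.integral_const_mul]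
      _ ≤ K * x ^ 2 * L := by
          apply mul_le_mul_of_nonneg_left _ (by positivity)
          rw [intervalIntegral.integral_of_le hM]
          exact setIntegral_mono_set hbint
            (Eventually.of_forall fun z => by positivity)
            (HasSubset.Subset.eventuallyLE Set.Ioc_subset_Ioi_self)
      _ = K * L * x ^ 2 := by ring
  -- conclude
  rw [hasDerivAt_iff_tendsto_slope]
  refine squeeze_zero_norm (a := fun x : ℝ => K * L * |x|) (fun x => ?_) ?_
  · 
    rcases eq_or_ne x 0 with rfl | hx
    · simp [slope]
    · have hxabs : 0 < |x| := abs_pos.mpr hx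
      have : slope (fun s : ℝ => a s y t) 0 x = (a x y t - a 0 y t) / x := by
        simp [slope_def_field]
      rw [this, Real.norm_eq_abs, abs_div]
      calc |a x y t - a 0 y t| / |x| ≤ (K * L * x ^ 2) / |x| := by gcongr; exact main x
        _ = K * L * |x| := by
            rw [mul_div_assoc, show x ^ 2 / |x| = |x| by
              rw [← sq_abs x, sq]
              exact mul_div_cancel_right₀ _ hxabs.ne']
  · have hcont : Continuous (fun x : ℝ => K * L * |x|) :=
      continuous_const.mul continuous_abs
    have h2 : Tendsto (fun x : ℝ => K * L * |x|) (nhds 0) (nhds 0) := by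
      have := hcont.tendsto 0
      simpa using this
    exact h2.mono_left nhdsWithin_le_nhds
end

section
/- If 0 < α₀ < (θ*/T)², |k| ≠ 1, and (q μ₀/(4π))(1+k)² < p_z (1+k³)/(k I₀), then β₀ ≠ 0 and γ₀ < 0; in particular the Ortega–Zhang twist conditions 0 < α₀ < (θ*/T)², β₀ of constant sign with β₀ ≠ 0, and γ₀ < 0 all hold. -/
open Real

/-- If `0 < α₀ < (θ*/T)²`, `|k| ≠ 1` and `(q μ₀/(4π))(1+k)² < p_z (1+k³)/(k I₀)`, then
`β₀ ≠ 0` and `γ₀ < 0`; in particular the Ortega–Zhang twist conditions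
`0 < α₀ < (θ*/T)²`, `β₀ ≠ 0` (of constant sign) and `γ₀ < 0` all hold. -/
theorem twist_conditions_hold
    (T m q μ₀ d I₀ k p_z : ℝ)
    (hT : 0 < T) (hm : 0 < m) (hq : 0 < q) (hμ : 0 < μ₀) (hd : 0 < d)
    (hI : I₀ ≠ 0) (hk : k ≠ 0) (hk1 : k ≠ -1)
    (θstar α₀ β₀ γ₀ : ℝ)
    (hθ : θstar = Real.arccos (-(1 / 4)))
    (hα : α₀ = -(q * μ₀ / (2 * π * m ^ 2)) * p_z * I₀ * ((1 + k) ^ 3 / (k * d ^ 2)))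
    (hβ : β₀ = (q * μ₀ / (2 * π * m ^ 2)) * p_z * I₀
      * ((1 + k) ^ 4 * (k - 1) / (k ^ 2 * d ^ 3)))
    (hγ : γ₀ = (q * μ₀ / (2 * π * m ^ 2)) * I₀ ^ 2 * ((1 + k) ^ 4 / (d ^ 4 * k ^ 2))
      * ((q * μ₀ / (4 * π)) * (1 + k) ^ 2 - p_z * (1 + k ^ 3) / (k * I₀)))
    (h1 : 0 < α₀) (h2 : α₀ < (θstar / T) ^ 2) (h3 : |k| ≠ 1)
    (h4 : (q * μ₀ / (4 * π)) * (1 + k) ^ 2 < p_z * (1 + k ^ 3) / (k * I₀)) :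
    β₀ ≠ 0 ∧ γ₀ < 0 ∧ 0 < α₀ ∧ α₀ < (θstar / T) ^ 2 := by
  have hπ : (0:ℝ) < π := Real.pi_pos
  have hC : 0 < q * μ₀ / (2 * π * m ^ 2) := by positivity
  have hk1' : 1 + k ≠ 0 := by intro h; apply hk1; linarith
  have hkm1 : k - 1 ≠ 0 := by
    intro h
    apply h3; have : k = 1 := by linarith
    simp [this]
  have hp : p_z ≠ 0 := by
    intro h
    rw [hα, h] at h1
    simp at h1
  refine ⟨?_, ?_, h1, h2⟩
  · rw [hβ]
    have hd' : d ≠ 0 := ne_of_gt hd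
    positivity
  · rw [hγ]
    have hfac : 0 < (q * μ₀ / (2 * π * m ^ 2)) * I₀ ^ 2 * ((1 + k) ^ 4 / (d ^ 4 * k ^ 2)) := by
      positivity
    have hneg : (q * μ₀ / (4 * π)) * (1 + k) ^ 2 - p_z * (1 + k ^ 3) / (k * I₀) < 0 := by
      linarith
    exact mul_neg_of_pos_of_neg hfac hneg
end
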